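/- arXiv:2107.05875 — 2 statements merged into one kernel-verified Lean document; each statement's English description precedes it below -/
import Mathlib

section
/- In a Veldkamp n-gon, if (x_0,x_1,...,x_n) and (y_0,y_1,...,y_n) are two straight n-paths with x_0=y_0 and x_n=y_n, then x_1 and y_1 are opposite at x_0 if and only if x_{n-1} and y_{n-1} are opposite at x_n. -/
/-- A Veldkamp graph: a graph endowed, at each vertex `v`, with a symmetric
anti-reflexive "local opposition" relation `opp v` on the neighborhood of `v`
that is 2-plump. -/
structure VeldkampGraph (V : Type*) where
  adj : V → V → Prop
  adj_symm : ∀ u v, adj u v → adj v u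
  adj_irrefl : ∀ v, ¬ adj v v
  opp : V → V → V → Prop
  opp_adj_left : ∀ v x y, opp v x y → adj v x
  opp_adj_right : ∀ v x y, opp v x y → adj v y
  opp_symm : ∀ v x y, opp v x y → opp v y x
  opp_irrefl : ∀ v x, ¬ opp v x x
  plump2 : ∀ v x y, adj v x → adj v y → ∃ z, adj v z ∧ opp v z x ∧ opp v z y

namespace VeldkampGraph

variable {V : Type*} (Γ : VeldkampGraph V)

/-- `p 0, p 1, ..., p s` is an `s`-path. -/
def IsPath (s : ℕ) (p : ℕ → V) : Prop :=
  (∀ i, i < s → Γ.adj (p i) (p (i + 1))) ∧ ∀ i, i + 2 ≤ s → p i ≠ p (i + 2)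

/-- `p 0, ..., p s` is a straight `s`-path. -/
def IsStraight (s : ℕ) (p : ℕ → V) : Prop :=
  Γ.IsPath s p ∧ ∀ i, i + 2 ≤ s → Γ.opp (p (i + 1)) (p i) (p (i + 2))

/-- There is an `s`-path from `x` to `y`. -/
def HasPathLen (s : ℕ) (x y : V) : Prop :=
  ∃ p : ℕ → V, Γ.IsPath s p ∧ p 0 = x ∧ p s = y

/-- `dist (x, y) = k`. -/
def DistEq (x y : V) (k : ℕ) : Prop :=
  Γ.HasPathLen k x y ∧ ∀ j < k, ¬ Γ.HasPathLen j x y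

def Connected : Prop := ∀ x y : V, ∃ s, Γ.HasPathLen s x y

def Bipartite : Prop := ∃ P : Set V, ∀ u v, Γ.adj u v → (u ∈ P ↔ v ∉ P)

/-- A straight `m`-circuit, encoded as an `m`-periodic straight closed walk. -/
def IsClosedStraight (m : ℕ) (q : ℕ → V) : Prop :=
  (∀ i, Γ.adj (q i) (q (i + 1))) ∧ (∀ i, Γ.opp (q (i + 1)) (q i) (q (i + 2))) ∧
    ∀ i, q (i + m) = q i

/-- An `m`-circuit: an `m`-periodic closed walk through `m` distinct vertices. -/
def IsCircuit (m : ℕ) (q : ℕ → V) : Prop :=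
  (∀ i, Γ.adj (q i) (q (i + 1))) ∧ (∀ i, q (i + m) = q i) ∧
    ∀ i j, i < m → j < m → q i = q j → i = j

end VeldkampGraph

/-- A Veldkamp `n`-gon. -/
structure VeldkampNGon (V : Type*) (n : ℕ) extends VeldkampGraph V where
  two_le : 2 ≤ n
  connected : toVeldkampGraph.Connected
  bipartite : toVeldkampGraph.Bipartite
  vp2 : ∀ k, 1 ≤ k → k ≤ n - 1 → ∀ p j q, toVeldkampGraph.IsStraight k p →
    j ≤ k → toVeldkampGraph.IsStraight j q → q 0 = p 0 → q j = p k →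
    j = k ∧ ∀ i ≤ k, q i = p i
  vp3 : ∀ p, toVeldkampGraph.IsStraight (n + 1) p →
    ∃ q, toVeldkampGraph.IsClosedStraight (2 * n) q ∧ ∀ i ≤ n + 1, q i = p i

namespace VeldkampNGon

variable {V : Type*} {n : ℕ} (Γ : VeldkampNGon V n)

/-- Two vertices are opposite if there is a root (straight `n`-path) from one
to the other. -/
def Opp (x y : V) : Prop :=
  ∃ p, Γ.IsStraight n p ∧ p 0 = x ∧ p n = y

/-- The set of vertices opposite `x`. -/
def opSet (x : V) : Set V := {y | Γ.Opp x y}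

/-- Two edges are opposite if some straight `(n+1)`-path has them as its first
and last edges. -/
def EdgeOpp (e f : Sym2 V) : Prop :=
  ∃ p, Γ.IsStraight (n + 1) p ∧ s(p 0, p 1) = e ∧ s(p n, p (n + 1)) = f

end VeldkampNGon


/-!
Prolong the root `p` backwards by `q 1`: since `q 1` and `p 1` are opposite at `p 0`, the
result is a straight `(n+1)`-path, which (VP3) lies on a straight `2n`-circuit. From `p n`
the circuit returns to `q 1` along a straight `(n-1)`-path; so does `q` read backwards, and
straight paths of length `< n` are determined by their ends (VP2). Hence the circuit passes
`p (n-1)`, `p n`, `q (n-1)`, and its straightness at `p n` is the claim. The converse is the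
same statement for the reversed roots.
-/

namespace VeldkampGraph

variable {V : Type*} {Γ : VeldkampGraph V}

lemma isStraight_of_adj_of_opp {s : ℕ} {p : ℕ → V}
    (hadj : ∀ i < s, Γ.adj (p i) (p (i + 1)))
    (hopp : ∀ i, i + 2 ≤ s → Γ.opp (p (i + 1)) (p i) (p (i + 2))) : Γ.IsStraight s p :=
  ⟨⟨hadj, fun i hi he => Γ.opp_irrefl _ (p (i + 2)) (he ▸ hopp i hi)⟩, hopp⟩

lemma IsStraight.mono {s j : ℕ} {p : ℕ → V} (h : Γ.IsStraight s p) (hj : j ≤ s) :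
    Γ.IsStraight j p :=
  isStraight_of_adj_of_opp (fun i hi => h.1.1 i (by omega)) fun i hi => h.2 i (by omega)

lemma IsStraight.reverse {s : ℕ} {p : ℕ → V} (h : Γ.IsStraight s p) :
    Γ.IsStraight s (fun i => p (s - i)) := by
  refine isStraight_of_adj_of_opp (fun i hi => ?_) fun i hi => ?_
  · have := Γ.adj_symm _ _ (h.1.1 (s - (i + 1)) (by omega))
    rwa [show s - (i + 1) + 1 = s - i by omega] at this
  · have := Γ.opp_symm _ _ _ (h.2 (s - (i + 2)) (by omega))
    rwa [show s - (i + 2) + 1 = s - (i + 1) by omega,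
      show s - (i + 2) + 2 = s - i by omega] at this

def cons (x : V) (p : ℕ → V) : ℕ → V
  | 0 => x
  | i + 1 => p i

lemma IsStraight.cons {s : ℕ} {p : ℕ → V} {x : V} (h : Γ.IsStraight s p)
    (hx : Γ.opp (p 0) x (p 1)) : Γ.IsStraight (s + 1) (cons x p) := by
  refine isStraight_of_adj_of_opp (fun i hi => ?_) fun i hi => ?_
  · cases i with
    | zero => exact Γ.adj_symm _ _ (Γ.opp_adj_left _ _ _ hx)
    | succ i => exact h.1.1 i (by omega)
  · cases i with
    | zero => exact hx
    | succ i => exact h.2 i (by omega)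

lemma IsClosedStraight.isStraight_shift {m : ℕ} {c : ℕ → V} (hc : Γ.IsClosedStraight m c)
    (k s : ℕ) : Γ.IsStraight s (fun i => c (k + i)) :=
  isStraight_of_adj_of_opp (fun i _ => hc.1 (k + i)) fun i _ => hc.2.1 (k + i)

end VeldkampGraph

namespace VeldkampNGon

variable {V : Type*} {n : ℕ} (Γ : VeldkampNGon V n)

lemma isStraight_eq_of_ends {k : ℕ} (hk1 : 1 ≤ k) (hkn : k ≤ n - 1) {p q : ℕ → V}
    (hp : Γ.IsStraight k p) (hq : Γ.IsStraight k q) (h0 : q 0 = p 0) (hk : q k = p k) :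
    ∀ i ≤ k, q i = p i :=
  (Γ.vp2 k hk1 hkn p k q hp le_rfl hq h0 hk).2

lemma opp_last_of_opp_first {p q : ℕ → V} (hp : Γ.IsStraight n p) (hq : Γ.IsStraight n q)
    (hn : q n = p n) (h : Γ.opp (p 0) (p 1) (q 1)) :
    Γ.opp (p n) (p (n - 1)) (q (n - 1)) := by
  have hn2 := Γ.two_le
  obtain ⟨c, hc, hcr⟩ := Γ.vp3 _ (hp.cons (Γ.opp_symm _ _ _ h))
  have hc_succ : ∀ i ≤ n, c (i + 1) = p i := fun i hi => hcr (i + 1) (by omega)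
  have hc_last : c (n + 1 + (n - 1)) = q 1 := by
    rw [show n + 1 + (n - 1) = 0 + 2 * n by omega, hc.2.2, hcr 0 (by omega)]
    rfl
  have hreturn := Γ.isStraight_eq_of_ends (by omega) le_rfl
    (hq.reverse.mono (Nat.sub_le n 1)) (hc.isStraight_shift (n + 1) (n - 1))
    (by simp [hc_succ n le_rfl, hn]) (by simp [hc_last, Nat.sub_sub_self (by omega : 1 ≤ n)])
  have hc_prev : c n = p (n - 1) := by
    simpa [Nat.sub_add_cancel (by omega : 1 ≤ n)] using hc_succ (n - 1) (by omega)
  have hc_next : c (n + 2) = q (n - 1) := by simpa using hreturn 1 (by omega)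
  simpa [hc_succ n le_rfl, hc_prev, hc_next] using hc.2.1 n

end VeldkampNGon

/-- If `(x_0,...,x_n)` and `(y_0,...,y_n)` are two roots with `x_0 = y_0` and
`x_n = y_n`, then `x_1` and `y_1` are opposite at `x_0` iff `x_{n-1}` and
`y_{n-1}` are opposite at `x_n`. -/
theorem stmt4 {V : Type*} {n : ℕ} (Γ : VeldkampNGon V n) (p q : ℕ → V)
    (hp : Γ.IsStraight n p) (hq : Γ.IsStraight n q)
    (h0 : q 0 = p 0) (hn : q n = p n) :
    Γ.opp (p 0) (p 1) (q 1) ↔ Γ.opp (p n) (p (n - 1)) (q (n - 1)) := by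
  have hsub : n - (n - 1) = 1 := Nat.sub_sub_self (by linarith [Γ.two_le])
  refine ⟨Γ.opp_last_of_opp_first hp hq hn, fun h => ?_⟩
  have := Γ.opp_last_of_opp_first hp.reverse hq.reverse (by simpa using h0)
    (by simpa [hsub, hn] using h)
  simpa [hsub] using this
end

section
/- In a green Veldkamp quadrangle, if a and b are points with dist(a,b)=4 that are not opposite, then a^op = b^op and the sets of vertices at distance 2 from a and from b coincide. -/
/-- A green Veldkamp quadrangle: a Veldkamp 4-gon with a bipartition into
points `Pt` and lines (the complement), whose local opposition relations at
lines are trivial. -/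
structure GreenVQ (V : Type*) extends VeldkampNGon V 4 where
  Pt : Set V
  part : ∀ u v, adj u v → (u ∈ Pt ↔ v ∉ Pt)
  green : ∀ x, x ∉ Pt → ∀ a b, adj x a → adj x b → a ≠ b → opp x a b

namespace GreenVQ

variable {V : Type*} (Γ : GreenVQ V)

/-- A weed: a non-straight 4-path `(a,x,b,y,c)` with `a,b,c` points and
`dist (a, c) = 4`. -/
def IsWeed (p : ℕ → V) : Prop :=
  Γ.IsPath 4 p ∧ ¬ Γ.IsStraight 4 p ∧ p 0 ∈ Γ.Pt ∧ p 2 ∈ Γ.Pt ∧ p 4 ∈ Γ.Pt ∧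
    Γ.DistEq (p 0) (p 4) 4

/-- `a ≃ b` for points: `a = b` or some weed begins at `a` and ends at `b`. -/
def PtSim (a b : V) : Prop :=
  a = b ∨ ∃ p, Γ.IsWeed p ∧ p 0 = a ∧ p 4 = b

/-- `x ~ y` for lines: some weed contains both `x` and `y`. -/
def LnSim (x y : V) : Prop :=
  ∃ p, Γ.IsWeed p ∧ ((p 1 = x ∧ p 3 = y) ∨ (p 1 = y ∧ p 3 = x))

/-- Flat: no two vertices have the same set of opposite vertices. -/
def Flat : Prop := ∀ x y : V, Γ.opSet x = Γ.opSet y → x = y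

end GreenVQ

/-!
Everything rests on one move. If `P` is opposite `ρ` and `L` is a line through `ρ`, pivoting
roots (closing straight 5-paths into straight octagons) gives a root from `P` to `ρ` ending
with `L`; as local opposition at `L` is trivial, its vertex before `L` continues straight to
any other point `s` of `L`. So `P` is opposite every point of `L` but at most one, which is
collinear with `P`. For `a`, `b` at distance 4 and not opposite, no point opposite `a` is
collinear with `b`, and chaining the move along a 4-path from `a` to `b` transports
opposition from `a` to `b`.
-/

namespace VeldkampGraph

variable {V : Type*} (Γ : VeldkampGraph V)

/-- A root (straight 4-path) given by its five vertices. -/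
structure Root (v0 v1 v2 v3 v4 : V) : Prop where
  adj01 : Γ.adj v0 v1
  adj12 : Γ.adj v1 v2
  adj23 : Γ.adj v2 v3
  adj34 : Γ.adj v3 v4
  ne02 : v0 ≠ v2
  ne13 : v1 ≠ v3
  ne24 : v2 ≠ v4
  opp1 : Γ.opp v1 v0 v2
  opp2 : Γ.opp v2 v1 v3
  opp3 : Γ.opp v3 v2 v4

def ShareNeighbor (x y : V) : Prop := ∃ m, Γ.adj x m ∧ Γ.adj m y

variable {Γ}

protected lemma adj.symm {x y : V} (h : Γ.adj x y) : Γ.adj y x := Γ.adj_symm x y h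

protected lemma opp.symm {v x y : V} (h : Γ.opp v x y) : Γ.opp v y x := Γ.opp_symm v x y h

protected lemma opp.ne {v x y : V} (h : Γ.opp v x y) : x ≠ y := by
  rintro rfl
  exact Γ.opp_irrefl v x h

lemma exists_opp {v x : V} (h : Γ.adj v x) : ∃ z, Γ.adj v z ∧ Γ.opp v x z := by
  obtain ⟨z, hz, hzx, -⟩ := Γ.plump2 v x x h h
  exact ⟨z, hz, hzx.symm⟩

lemma ShareNeighbor.symm {x y : V} (h : Γ.ShareNeighbor x y) : Γ.ShareNeighbor y x := by
  obtain ⟨m, hxm, hmy⟩ := h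
  exact ⟨m, hmy.symm, hxm.symm⟩

lemma Root.symm {v0 v1 v2 v3 v4 : V} (h : Γ.Root v0 v1 v2 v3 v4) : Γ.Root v4 v3 v2 v1 v0 :=
  ⟨h.adj34.symm, h.adj23.symm, h.adj12.symm, h.adj01.symm, h.ne24.symm, h.ne13.symm,
    h.ne02.symm, h.opp3.symm, h.opp2.symm, h.opp1.symm⟩

lemma IsClosedStraight.root {m : ℕ} {q : ℕ → V} (hq : Γ.IsClosedStraight m q) (i : ℕ) :
    Γ.Root (q i) (q (i + 1)) (q (i + 2)) (q (i + 3)) (q (i + 4)) := by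
  obtain ⟨hadj, hopp, -⟩ := hq
  exact ⟨hadj i, hadj (i + 1), hadj (i + 2), hadj (i + 3), (hopp i).ne, (hopp (i + 1)).ne,
    (hopp (i + 2)).ne, hopp i, hopp (i + 1), hopp (i + 2)⟩

lemma Root.isStraight {v0 v1 v2 v3 v4 : V} (h : Γ.Root v0 v1 v2 v3 v4) :
    Γ.IsStraight 4 (fun | 0 => v0 | 1 => v1 | 2 => v2 | 3 => v3 | _ => v4) := by
  obtain ⟨_, _, _, _, _, _, _, _, _, _⟩ := h
  refine ⟨⟨?_, ?_⟩, ?_⟩ <;> intro i hi <;> obtain _ | _ | _ | _ | i := i <;>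
    first | assumption | omega

lemma hasPathLen_zero (x : V) : Γ.HasPathLen 0 x x :=
  ⟨fun _ => x, ⟨fun _ hi => absurd hi (Nat.not_lt_zero _), fun _ hi => by omega⟩, rfl, rfl⟩

lemma HasPathLen.eq {x y : V} (h : Γ.HasPathLen 0 x y) : x = y := by
  obtain ⟨p, -, rfl, rfl⟩ := h
  rfl

lemma HasPathLen.adj {x y : V} (h : Γ.HasPathLen 1 x y) : Γ.adj x y := by
  obtain ⟨p, ⟨hadj, -⟩, rfl, rfl⟩ := h
  exact hadj 0 Nat.one_pos

lemma hasPathLen_two_iff {x y : V} : Γ.HasPathLen 2 x y ↔ x ≠ y ∧ Γ.ShareNeighbor x y := by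
  constructor
  · rintro ⟨p, ⟨hadj, hne⟩, rfl, rfl⟩
    exact ⟨hne 0 le_rfl, p 1, hadj 0 (by omega), hadj 1 (by omega)⟩
  · rintro ⟨hxy, m, hxm, hmy⟩
    refine ⟨fun | 0 => x | 1 => m | _ => y, ⟨?_, ?_⟩, rfl, rfl⟩ <;> intro i hi <;>
      obtain _ | _ | i := i <;> first | assumption | omega

lemma HasPathLen.exists_four {x y : V} (h : Γ.HasPathLen 4 x y) :
    ∃ u v w, Γ.adj x u ∧ Γ.adj u v ∧ Γ.adj v w ∧ Γ.adj w y ∧ x ≠ v := by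
  obtain ⟨p, ⟨hadj, hne⟩, rfl, rfl⟩ := h
  exact ⟨p 1, p 2, p 3, hadj 0 (by omega), hadj 1 (by omega), hadj 2 (by omega),
    hadj 3 (by omega), hne 0 (by omega)⟩

lemma HasPathLen.symm {s : ℕ} {x y : V} (h : Γ.HasPathLen s x y) : Γ.HasPathLen s y x := by
  obtain ⟨p, ⟨hadj, hne⟩, rfl, rfl⟩ := h
  refine ⟨fun i => p (s - i), ⟨fun i hi => ?_, fun i hi => ?_⟩, by simp, by simp⟩
  · have hi' : s - i = s - (i + 1) + 1 := by omega
    simpa only [hi'] using (hadj (s - (i + 1)) (by omega)).symm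
  · have hi' : s - i = s - (i + 2) + 2 := by omega
    simpa only [hi'] using (hne (s - (i + 2)) (by omega)).symm

lemma DistEq.symm {x y : V} {k : ℕ} (h : Γ.DistEq x y k) : Γ.DistEq y x k :=
  ⟨h.1.symm, fun j hj hp => h.2 j hj hp.symm⟩

lemma DistEq.not_shareNeighbor {x y : V} {k : ℕ} (h : Γ.DistEq x y k) (hk : 2 < k) :
    ¬ Γ.ShareNeighbor x y := by
  intro hxy
  by_cases hx : x = y
  · exact h.2 0 (by omega) (hx ▸ hasPathLen_zero x)
  · exact h.2 2 hk (hasPathLen_two_iff.2 ⟨hx, hxy⟩)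

lemma distEq_two_of_shareNeighbor (hΓ : Γ.Bipartite) {x y : V} (hxy : x ≠ y)
    (h : Γ.ShareNeighbor x y) : Γ.DistEq x y 2 := by
  refine ⟨hasPathLen_two_iff.2 ⟨hxy, h⟩, fun j hj hp => ?_⟩
  obtain ⟨P, hP⟩ := hΓ
  obtain ⟨m, hxm, hmy⟩ := h
  interval_cases j
  · exact hxy hp.eq
  · have := hP x m hxm
    have := hP m y hmy
    have := hP x y hp.adj
    tauto

end VeldkampGraph

namespace VeldkampNGon

open VeldkampGraph

variable {V : Type*} {Γ : VeldkampNGon V 4}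

lemma opp_iff_exists_root {x y : V} : Γ.Opp x y ↔ ∃ v1 v2 v3, Γ.Root x v1 v2 v3 y := by
  constructor
  · rintro ⟨p, ⟨⟨hadj, hne⟩, hopp⟩, rfl, rfl⟩
    exact ⟨p 1, p 2, p 3, hadj 0 (by omega), hadj 1 (by omega), hadj 2 (by omega),
      hadj 3 (by omega), hne 0 (by omega), hne 1 (by omega), hne 2 (by omega),
      hopp 0 (by omega), hopp 1 (by omega), hopp 2 (by omega)⟩
  · rintro ⟨v1, v2, v3, h⟩
    exact ⟨_, h.isStraight, rfl, rfl⟩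

lemma _root_.VeldkampGraph.Root.opp {v0 v1 v2 v3 v4 : V} (h : Γ.Root v0 v1 v2 v3 v4) :
    Γ.Opp v0 v4 :=
  opp_iff_exists_root.2 ⟨v1, v2, v3, h⟩

lemma Opp.symm {x y : V} (h : Γ.Opp x y) : Γ.Opp y x := by
  obtain ⟨v1, v2, v3, hr⟩ := opp_iff_exists_root.1 h
  exact hr.symm.opp

/-- A root `x, r1, r2, r3, x` would give two straight paths from `r1` to `x`, of lengths 1 and 3. -/
lemma not_opp_self (x : V) : ¬ Γ.Opp x x := by
  intro h
  obtain ⟨r1, r2, r3, ⟨h01, _, _, _, _, _, _, _, _, _⟩⟩ := opp_iff_exists_root.1 h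
  have h3 : Γ.IsStraight 3 (fun | 0 => r1 | 1 => r2 | 2 => r3 | _ => x) := by
    refine ⟨⟨?_, ?_⟩, ?_⟩ <;> intro i hi <;> obtain _ | _ | _ | i := i <;>
      first | assumption | omega
  have h1 : Γ.IsStraight 1 (fun | 0 => r1 | _ => x) := by
    refine ⟨⟨?_, ?_⟩, ?_⟩ <;> intro i hi <;> obtain _ | i := i <;>
      first | exact h01.symm | omega
  exact absurd (Γ.vp2 3 (by omega) (by omega) _ 1 _ h3 (by omega) h1 rfl rfl).1 (by omega)

/-- The straight 5-path `m, P, r1, r2, r3, ρ` closes up to a straight 8-circuit, whose other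
half is a root from `P` to `ρ` starting with the edge `P m`. -/
lemma _root_.VeldkampGraph.Root.pivot {P r1 r2 r3 ρ m : V} (h : Γ.Root P r1 r2 r3 ρ)
    (hm : Γ.adj P m) (ho : Γ.opp P m r1) : ∃ s n, Γ.Root P m s n ρ := by
  obtain ⟨_, _, _, _, _, _, _, _, _, _⟩ := h
  have hmP := hm.symm
  have hmr1 := ho.ne
  have h5 : Γ.IsStraight 5 (fun | 0 => m | 1 => P | 2 => r1 | 3 => r2 | 4 => r3 | _ => ρ) := by
    refine ⟨⟨?_, ?_⟩, ?_⟩ <;> intro i hi <;> obtain _ | _ | _ | _ | _ | i := i <;>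
      first | assumption | omega
  obtain ⟨q, hq, hqp⟩ := Γ.vp3 _ h5
  have hq5 : q 5 = ρ := hqp 5 (by omega)
  have hq8 : q 8 = m := (hq.2.2 0).trans (hqp 0 (by omega))
  have hq9 : q 9 = P := (hq.2.2 1).trans (hqp 1 (by omega))
  have hr := hq.root 5
  rw [hq5, hq8, hq9] at hr
  exact ⟨_, _, hr.symm⟩

/-- Two pivots: first to an edge `P m` with `m` opposite both `r1` and `e` at `P` (2-plumpness),
then to `P e`. -/
lemma Opp.exists_root_of_adj_left {P ρ e : V} (h : Γ.Opp P ρ) (he : Γ.adj P e) :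
    ∃ s n, Γ.Root P e s n ρ := by
  obtain ⟨r1, r2, r3, hr⟩ := opp_iff_exists_root.1 h
  obtain ⟨m, hm, hmr1, hme⟩ := Γ.plump2 P r1 e hr.adj01 he
  obtain ⟨s, n, hr'⟩ := hr.pivot hm hmr1
  exact hr'.pivot he hme.symm

lemma Opp.exists_root_of_adj_right {P ρ L : V} (h : Γ.Opp P ρ) (hL : Γ.adj L ρ) :
    ∃ v w, Γ.Root P v w L ρ := by
  obtain ⟨s, n, hr⟩ := h.symm.exists_root_of_adj_left hL.symm
  exact ⟨n, s, hr.symm⟩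

end VeldkampNGon

namespace GreenVQ

open VeldkampGraph VeldkampNGon

variable {V : Type*} {Γ : GreenVQ V}

lemma not_mem_pt_of_adj {x p : V} (h : Γ.adj x p) (hp : p ∈ Γ.Pt) : x ∉ Γ.Pt :=
  fun hx => (Γ.part x p h).1 hx hp

lemma mem_pt_of_adj {x p : V} (h : Γ.adj x p) (hx : x ∉ Γ.Pt) : p ∈ Γ.Pt :=
  not_not.1 fun hp => hx ((Γ.part x p h).2 hp)

lemma _root_.VeldkampGraph.Root.replace_last {v0 v1 v2 L v4 s : V}
    (h : Γ.Root v0 v1 v2 L v4) (hL : L ∉ Γ.Pt) (hs : Γ.adj L s) (hne : v2 ≠ s) :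
    Γ.Root v0 v1 v2 L s :=
  { h with adj34 := hs, ne24 := hne, opp3 := Γ.green L hL v2 s h.adj23.symm hs hne }

lemma _root_.VeldkampGraph.Root.replace_first {v0 L v2 v3 v4 s : V}
    (h : Γ.Root v0 L v2 v3 v4) (hL : L ∉ Γ.Pt) (hs : Γ.adj s L) (hne : s ≠ v2) :
    Γ.Root s L v2 v3 v4 :=
  (h.symm.replace_last hL hs.symm hne.symm).symm

lemma exists_root_of_adj_adj {a L v : V} (hL : L ∉ Γ.Pt) (haL : Γ.adj a L) (hLv : Γ.adj L v)
    (hav : a ≠ v) : ∃ m ρ, Γ.Root a L v m ρ := by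
  obtain ⟨m, hvm, hLm⟩ := exists_opp hLv.symm
  obtain ⟨ρ, hmρ, hvρ⟩ := exists_opp hvm.symm
  exact ⟨m, ρ, haL, hLv, hvm, hmρ, hav, hLm.ne, hvρ.ne, Γ.green L hL a v haL.symm hLv hav,
    hLm, hvρ⟩

/-- Pivot the root to end with the line `L`; its vertex before `L` is either `s` or, by
greenness of `L`, can be continued straight to `s`. -/
lemma _root_.VeldkampNGon.Opp.opp_or_root {P ρ L s : V} (h : Γ.Opp P ρ) (hLρ : Γ.adj L ρ)
    (hL : L ∉ Γ.Pt) (hLs : Γ.adj L s) : Γ.Opp P s ∨ ∃ v, Γ.Root P v s L ρ := by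
  obtain ⟨v, w, hr⟩ := h.exists_root_of_adj_right hLρ
  by_cases hw : w = s
  · exact Or.inr ⟨v, hw ▸ hr⟩
  · exact Or.inl (hr.replace_last hL hLs hw).opp

lemma _root_.VeldkampNGon.Opp.opp_of_not_shareNeighbor {P ρ L s : V} (h : Γ.Opp P ρ)
    (hLρ : Γ.adj L ρ) (hL : L ∉ Γ.Pt) (hLs : Γ.adj L s) (hPs : ¬ Γ.ShareNeighbor P s) :
    Γ.Opp P s :=
  (h.opp_or_root hLρ hL hLs).resolve_right fun ⟨v, hr⟩ => hPs ⟨v, hr.adj01, hr.adj12⟩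

lemma not_opp_of_shareNeighbor {P v : V} (hP : P ∈ Γ.Pt) (h : Γ.ShareNeighbor P v) :
    ¬ Γ.Opp P v := by
  intro hPv
  obtain ⟨L, hPL, hLv⟩ := h
  rcases hPv.opp_or_root hLv (not_mem_pt_of_adj hPL.symm hP) hPL.symm with hPP | ⟨w, hr⟩
  · exact not_opp_self P hPP
  · exact hr.ne02 rfl

variable (Γ) in
/-- Follow a 4-path `a, x, c, y, b` from a vertex `u` opposite `a`: either `u` is opposite `c`,
hence `b`; or `u` lies on a line `m` through `c`, and roots through `u` and a third point `δ`
of `m` lead on to `b`. Each step could only fail if a point opposite `a` were collinear with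
`b`, which would make `a` and `b` opposite or at distance 2. -/
lemma opSet_subset_opSet_of_distEq_four {a b : V} (ha : a ∈ Γ.Pt) (hb : b ∈ Γ.Pt)
    (hd : Γ.DistEq a b 4) (hno : ¬ Γ.Opp a b) : Γ.opSet a ⊆ Γ.opSet b := by
  intro u (hu : Γ.Opp a u)
  show Γ.Opp b u
  have hfar : ∀ w, Γ.Opp a w → ¬ Γ.ShareNeighbor w b := by
    rintro w hw ⟨m, hwm, hmb⟩
    exact hno (hw.opp_of_not_shareNeighbor hwm.symm (not_mem_pt_of_adj hmb hb) hmb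
      (hd.not_shareNeighbor (by omega)))
  obtain ⟨x, c, y, hax, hxc, hcy, hyb, hac⟩ := hd.1.exists_four
  have hx : x ∉ Γ.Pt := not_mem_pt_of_adj hax.symm ha
  have hc : c ∈ Γ.Pt := mem_pt_of_adj hxc hx
  have hy : y ∉ Γ.Pt := not_mem_pt_of_adj hyb hb
  refine Opp.symm ?_
  rcases hu.symm.opp_or_root hax.symm hx hxc with huc | ⟨m, hum⟩
  · exact huc.opp_of_not_shareNeighbor hcy.symm hy hyb (hfar u hu)
  have hm : m ∉ Γ.Pt := not_mem_pt_of_adj hum.adj12 hc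
  have hu' : u ∈ Γ.Pt := mem_pt_of_adj hum.adj01.symm hm
  obtain ⟨U, t, hct⟩ := exists_root_of_adj_adj hm hum.adj12.symm hum.adj01.symm hum.ne02.symm
  have hU : U ∉ Γ.Pt := not_mem_pt_of_adj hct.adj23.symm hu'
  rcases hct.opp.symm.opp_or_root hcy.symm hy hyb with htb | ⟨n, htn⟩
  · exact (htb.symm.opp_of_not_shareNeighbor hct.adj34 hU hct.adj23.symm
      fun h => hfar u hu h.symm).symm
  obtain ⟨δ, hmδ, hδc, hδu⟩ := Γ.plump2 m c u hum.adj12 hum.adj01.symm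
  have haδ : Γ.Opp a δ := Root.opp ⟨hax, hxc, hum.adj12.symm, hmδ, hac, hum.ne13.symm,
    hδc.ne.symm, Γ.green x hx a c hax.symm hxc hac, hum.opp2.symm, hδc.symm⟩
  have hδt : Γ.Opp δ t := (hct.replace_first hm hmδ.symm hδu.ne).opp
  have hδb : Γ.Opp δ b := hδt.opp_of_not_shareNeighbor htn.adj01.symm
    (not_mem_pt_of_adj htn.adj12 hb) htn.adj12 (hfar δ haδ)
  exact (hδb.symm.opp_of_not_shareNeighbor hmδ hm hum.adj01.symm fun h => hfar u hu h.symm).symm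

variable (Γ) in
/-- Extend `a, L, v` to a root `a, L, v, m, ρ`; a root from `b` to `ρ` ending with `m` passes
through `v`, since otherwise `v` would be opposite `b`, hence opposite `a`. -/
lemma distEq_two_of_opSet_eq {a b v : V} (ha : a ∈ Γ.Pt) (hop : Γ.opSet a = Γ.opSet b)
    (h : Γ.DistEq a v 2) : Γ.DistEq b v 2 := by
  obtain ⟨hav, L, haL, hLv⟩ := hasPathLen_two_iff.1 h.1
  have hL : L ∉ Γ.Pt := not_mem_pt_of_adj haL.symm ha
  have hv : v ∈ Γ.Pt := mem_pt_of_adj hLv hL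
  obtain ⟨m, ρ, hr⟩ := exists_root_of_adj_adj hL haL hLv hav
  have hbρ : Γ.Opp b ρ := show ρ ∈ Γ.opSet b from hop ▸ hr.opp
  rcases hbρ.opp_or_root hr.adj34 (not_mem_pt_of_adj hr.adj23.symm hv) hr.adj23.symm
    with hbv | ⟨w, hbw⟩
  · exact absurd (show v ∈ Γ.opSet a from hop ▸ hbv) (not_opp_of_shareNeighbor ha ⟨L, haL, hLv⟩)
  have hbv : b ≠ v := by
    rintro rfl
    exact not_opp_of_shareNeighbor hv ⟨m, hr.adj23, hr.adj34⟩ hbρ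
  exact distEq_two_of_shareNeighbor Γ.bipartite hbv ⟨w, hbw.adj01, hbw.adj12⟩

end GreenVQ

/-- If `a` and `b` are points at distance 4 that are not opposite, then
`a^op = b^op` and `Γ₂(a) = Γ₂(b)`. -/
theorem stmt10 {V : Type*} (Γ : GreenVQ V) (a b : V) (ha : a ∈ Γ.Pt) (hb : b ∈ Γ.Pt)
    (hd : Γ.DistEq a b 4) (hno : ¬ Γ.Opp a b) :
    Γ.opSet a = Γ.opSet b ∧ ∀ v : V, Γ.DistEq a v 2 ↔ Γ.DistEq b v 2 := by
  have hop : Γ.opSet a = Γ.opSet b :=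
    (Γ.opSet_subset_opSet_of_distEq_four ha hb hd hno).antisymm
      (Γ.opSet_subset_opSet_of_distEq_four hb ha hd.symm fun h => hno h.symm)
  exact ⟨hop, fun v => ⟨Γ.distEq_two_of_opSet_eq ha hop, Γ.distEq_two_of_opSet_eq hb hop.symm⟩⟩
end
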